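/- Conic directionality near the uniform field: let b, ξ ∈ ℝ³ with ξ ≠ 0 and |b − e₃| < 1/2, where e₃ = (0,0,1), and set v := |ξ| b + (⟨b,ξ⟩/|ξ|) ξ. Then the third component v₃ of v is strictly positive and |ξ| ≤ 12 v₃. -/

import Mathlib

/-! With `r = ‖ξ‖`, `s = ⟪ξ, e⟫` and `b = e + d`, `‖d‖ ≤ δ`, one has
`r ⟪v, e⟫ = r² ⟪b, e⟫ + ⟪b, ξ⟫ s ≥ r² (1 - δ) + s² - δ r |s| ≥ (1 - δ - δ²/4) r²`.
For `e = e₃` and `δ = 1/2` this gives `v₃ ≥ 7 ‖ξ‖ / 16`. -/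

open RealInnerProductSpace

section GroupVelocity

variable {E : Type*} [NormedAddCommGroup E] [InnerProductSpace ℝ E]

/-- `∇_ξ (⟪b, ξ⟫ ‖ξ‖)`. -/
noncomputable def groupVelocity (b ξ : E) : E := ‖ξ‖ • b + (⟪b, ξ⟫ / ‖ξ‖) • ξ

theorem norm_mul_inner_groupVelocity {ξ : E} (hξ : ξ ≠ 0) (b e : E) :
    ‖ξ‖ * ⟪groupVelocity b ξ, e⟫ = ‖ξ‖ ^ 2 * ⟪b, e⟫ + ⟪b, ξ⟫ * ⟪ξ, e⟫ := by
  have hr : ‖ξ‖ ≠ 0 := norm_ne_zero_iff.mpr hξ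
  simp only [groupVelocity, inner_add_left, inner_smul_left, RCLike.conj_to_real]
  field_simp

theorem abs_inner_sub_le_mul_norm {b e : E} {δ : ℝ} (hb : ‖b - e‖ ≤ δ) (x : E) :
    |⟪b, x⟫ - ⟪e, x⟫| ≤ δ * ‖x‖ := by
  rw [← inner_sub_left]
  exact (abs_real_inner_le_norm _ _).trans (by gcongr)

theorem mul_norm_le_inner_groupVelocity {b e ξ : E} {δ : ℝ} (he : ‖e‖ = 1)
    (hb : ‖b - e‖ ≤ δ) :
    (1 - δ - δ ^ 2 / 4) * ‖ξ‖ ≤ ⟪groupVelocity b ξ, e⟫ := by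
  rcases eq_or_ne ξ 0 with rfl | hξ
  · simp [groupVelocity]
  have hr : 0 < ‖ξ‖ := norm_pos_iff.mpr hξ
  have hbe : 1 - δ ≤ ⟪b, e⟫ := by
    have h := abs_le.mp (abs_inner_sub_le_mul_norm hb e)
    rw [real_inner_self_eq_norm_sq, he] at h
    linarith [h.1]
  have hbξ := abs_inner_sub_le_mul_norm hb ξ
  rw [real_inner_comm ξ e] at hbξ
  set r := ‖ξ‖
  set s := ⟪ξ, e⟫
  have hs : |s| ≤ r := by simpa [he] using abs_real_inner_le_norm ξ e
  -- `s² - δ r |s| ≥ -(δ r / 2)²` by completing the square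
  have key : r * ((1 - δ - δ ^ 2 / 4) * r) ≤ r * ⟪groupVelocity b ξ, e⟫ := by
    rw [norm_mul_inner_groupVelocity hξ]
    have h1 : -(δ * r * |s|) ≤ (⟪b, ξ⟫ - s) * s := by
      have := abs_mul (⟪b, ξ⟫ - s) s
      nlinarith [neg_abs_le ((⟪b, ξ⟫ - s) * s), abs_nonneg s]
    nlinarith [sq_nonneg (|s| - δ * r / 2), sq_abs s]
  exact le_of_mul_le_mul_left key hr

end GroupVelocity

/-- Conic directionality near the uniform field: if ξ ≠ 0 and |b − e₃| < 1/2, then the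
third component of the group velocity v = |ξ|b + (⟨b,ξ⟩/|ξ|)ξ is strictly positive
and |ξ| ≤ 12 v₃. -/
theorem conic_directionality_near_e3 (b ξ : EuclideanSpace ℝ (Fin 3)) (hξ : ξ ≠ 0)
    (hb : ‖b - EuclideanSpace.single (2 : Fin 3) (1 : ℝ)‖ < 1 / 2) :
    0 < (‖ξ‖ • b + ((inner ℝ b ξ : ℝ) / ‖ξ‖) • ξ) (2 : Fin 3) ∧
      ‖ξ‖ ≤ 12 * (‖ξ‖ • b + ((inner ℝ b ξ : ℝ) / ‖ξ‖) • ξ) (2 : Fin 3) := by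
  have hr : 0 < ‖ξ‖ := norm_pos_iff.mpr hξ
  have hv := mul_norm_le_inner_groupVelocity (ξ := ξ) (by simp) hb.le
  rw [EuclideanSpace.inner_single_right, RCLike.conj_to_real, one_mul] at hv
  change (1 - 1 / 2 - (1 / 2) ^ 2 / 4) * ‖ξ‖ ≤ (‖ξ‖ • b + (⟪b, ξ⟫ / ‖ξ‖) • ξ) 2 at hv
  constructor <;> linarith
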